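/- arXiv:1812.03587 — 5 statements merged into one kernel-verified Lean document; each statement's English description precedes it below -/
import Mathlib

section
/- Let q : ℝ → ℝ be a quadratic polynomial q(z) = (1/2)(c̃ z² − (d̃_L − d̃_R) z + d̃_L + d̃_R − c̃) with q''= c̃ ≠ 0, q(−1) = d̃_L > 0 and q(1) = d̃_R > 0. Then q has a root in [−1, 1] if and only if q'(−1) < 0, q'(1) > 0, and the minimum value q(z_crit) ≤ 0 where z_crit = (d̃_L − d̃_R)/(2c̃); equivalently, iff c̃ > |d̃_L − d̃_R|/2 and c̃² − (d̃_L + d̃_R) c̃ + (d̃_L − d̃_R)²/4 ≥ 0. Moreover the root in [−1,1] is unique when q(z_crit) = 0 and there are exactly two roots in [−1,1] when q(z_crit) < 0. -/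
open Set

set_option maxHeartbeats 1600000 in
/-- Root analysis of the quadratic `q̃(z) = ½(c̃ z² − (d̃_L − d̃_R) z + d̃_L + d̃_R − c̃)`
with `q̃(−1) = d̃_L > 0`, `q̃(1) = d̃_R > 0`. -/
theorem stmt_10 (c dL dR : ℝ) (hc : c ≠ 0) (hdL : dL > 0) (hdR : dR > 0)
    (q : ℝ → ℝ)
    (hq : ∀ z, q z = (1 / 2) * (c * z ^ 2 - (dL - dR) * z + dL + dR - c))
    (zcrit : ℝ) (hz : zcrit = (dL - dR) / (2 * c)) :
    ((∃ z ∈ Icc (-1 : ℝ) 1, q z = 0) ↔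
        (deriv q (-1) < 0 ∧ deriv q 1 > 0 ∧ q zcrit ≤ 0)) ∧
    ((∃ z ∈ Icc (-1 : ℝ) 1, q z = 0) ↔
        (c > |dL - dR| / 2 ∧ c ^ 2 - (dL + dR) * c + (dL - dR) ^ 2 / 4 ≥ 0)) ∧
    ((∃ z ∈ Icc (-1 : ℝ) 1, q z = 0) →
      (q zcrit = 0 → ∃! z : ℝ, z ∈ Icc (-1 : ℝ) 1 ∧ q z = 0) ∧
      (q zcrit < 0 → {z ∈ Icc (-1 : ℝ) 1 | q z = 0}.ncard = 2)) := by
  -- completed-square form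
  have key : ∀ z, q z = c / 2 * (z - zcrit) ^ 2 + q zcrit := by
    intro z
    rw [hq, hq, hz]
    field_simp
    ring
  have hq1 : q 1 = dR := by rw [hq]; ring
  have hqm1 : q (-1) = dL := by rw [hq]; ring
  have hqfun : q = fun z => (1 / 2) * (c * z ^ 2 - (dL - dR) * z + dL + dR - c) :=
    funext hq
  have hqcont : Continuous q := by
    rw [hqfun]
    exact continuous_const.mul (((((continuous_const.mul (continuous_pow 2)).sub
      (continuous_const.mul continuous_id)).add continuous_const).add
      continuous_const).sub continuous_const)
  have hder : ∀ z, deriv q z = c * z - (dL - dR) / 2 := by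
    intro z
    have hd : HasDerivAt (fun z : ℝ => (1 / 2) * (c * z ^ 2 - (dL - dR) * z + dL + dR - c))
        (c * z - (dL - dR) / 2) z := by
      have hp : HasDerivAt (fun z : ℝ => z ^ 2) (2 * z) z := by
        simpa using hasDerivAt_pow 2 z
      have h1 := (((HasDerivAt.const_mul c hp).sub
        (HasDerivAt.const_mul (dL - dR) (hasDerivAt_id' z))).add_const dL).add_const dR
      have h2 := (h1.sub_const c).const_mul (1 / 2)
      have : c * z - (dL - dR) / 2 = (1 / 2) * (c * (2 * z) - (dL - dR) * 1) := by ring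
      rw [this]
      exact h2
    rw [hqfun, hd.deriv]
  have habs : c > |dL - dR| / 2 ↔ (deriv q (-1) < 0 ∧ deriv q 1 > 0) := by
    rw [hder, hder, gt_iff_lt, div_lt_iff₀ (by norm_num : (0:ℝ) < 2), abs_lt]
    constructor
    · rintro ⟨h1, h2⟩; constructor <;> linarith
    · rintro ⟨h1, h2⟩; constructor <;> linarith
  have hqid : q zcrit * (2 * c) = -(c ^ 2 - (dL + dR) * c + (dL - dR) ^ 2 / 4) := by
    rw [hq, hz]
    field_simp
    ring
  -- central characterization
  have hmain : (∃ z ∈ Icc (-1 : ℝ) 1, q z = 0) ↔ (c > |dL - dR| / 2 ∧ q zcrit ≤ 0) := by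
    constructor
    · rintro ⟨z0, ⟨hz0l, hz0r⟩, hz00⟩
      have e0 : c * z0 ^ 2 - (dL - dR) * z0 + dL + dR - c = 0 := by
        have := hq z0; rw [hz00] at this; linarith
      have hcpos : 0 < c := by
        rcases lt_or_gt_of_ne hc with h | h
        · exfalso
          nlinarith [mul_nonneg (by linarith : (0:ℝ) ≤ -c)
              (by nlinarith : (0:ℝ) ≤ 1 - z0 ^ 2),
            mul_nonneg hdL.le (by linarith : (0:ℝ) ≤ 1 - z0),
            mul_nonneg hdR.le (by linarith : (0:ℝ) ≤ 1 + z0),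
            mul_pos hdL hdR]
        · exact h
      have h1 : dL - dR < 2 * c := by
        by_contra hcon; push_neg at hcon
        nlinarith [mul_nonneg (by linarith : (0:ℝ) ≤ 1 - z0)
          (by nlinarith [mul_nonneg hcpos.le (by linarith : (0:ℝ) ≤ 1 - z0)] :
            (0:ℝ) ≤ (dL - dR) - c * (1 + z0))]
      have h2 : -(dL - dR) < 2 * c := by
        by_contra hcon; push_neg at hcon
        nlinarith [mul_nonneg (by linarith : (0:ℝ) ≤ 1 + z0)
          (by nlinarith [mul_nonneg hcpos.le (by linarith : (0:ℝ) ≤ 1 + z0)] :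
            (0:ℝ) ≤ -(dL - dR) - c * (1 - z0))]
      have habs2 : |dL - dR| < 2 * c := abs_lt.2 ⟨by linarith, by linarith⟩
      refine ⟨by linarith, ?_⟩
      have hk := key z0
      rw [hz00] at hk
      nlinarith [mul_nonneg hcpos.le (sq_nonneg (z0 - zcrit))]
    · rintro ⟨hcabs, hqc0⟩
      have hcpos : 0 < c :=
        lt_of_le_of_lt (div_nonneg (abs_nonneg _) (by norm_num)) hcabs
      have habs2 := abs_lt.1 (show |dL - dR| < 2 * c by linarith)
      have hzcm1 : -1 < zcrit := by
        rw [hz, lt_div_iff₀ (by linarith : (0:ℝ) < 2 * c)]; linarith [habs2.1]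
      have hzc1 : zcrit < 1 := by
        rw [hz, div_lt_one (by linarith : (0:ℝ) < 2 * c)]; linarith [habs2.2]
      have hsub := intermediate_value_Icc' (by linarith : (-1:ℝ) ≤ zcrit)
        hqcont.continuousOn
      have hmem : (0:ℝ) ∈ Icc (q zcrit) (q (-1)) := ⟨hqc0, by rw [hqm1]; exact hdL.le⟩
      obtain ⟨z, hzmem, hz0⟩ := hsub hmem
      exact ⟨z, ⟨hzmem.1, le_trans hzmem.2 hzc1.le⟩, hz0⟩
  refine ⟨?_, ?_, ?_⟩
  · constructor
    · intro h
      obtain ⟨h1, h2⟩ := hmain.1 h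
      obtain ⟨d1, d2⟩ := habs.1 h1
      exact ⟨d1, d2, h2⟩
    · rintro ⟨d1, d2, h2⟩
      exact hmain.2 ⟨habs.2 ⟨d1, d2⟩, h2⟩
  · constructor
    · intro h
      obtain ⟨h1, h2⟩ := hmain.1 h
      have hcpos : 0 < c := lt_of_le_of_lt (div_nonneg (abs_nonneg _) (by norm_num)) h1
      refine ⟨h1, ?_⟩
      nlinarith [hqid, mul_nonneg (neg_nonneg.2 h2) hcpos.le]
    · rintro ⟨h1, h2⟩
      have hcpos : 0 < c := lt_of_le_of_lt (div_nonneg (abs_nonneg _) (by norm_num)) h1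
      refine hmain.2 ⟨h1, ?_⟩
      by_contra hcon; push_neg at hcon
      nlinarith [hqid, mul_pos hcon hcpos]
  · intro hex
    obtain ⟨h1, h2⟩ := hmain.1 hex
    have hcpos : 0 < c := lt_of_le_of_lt (div_nonneg (abs_nonneg _) (by norm_num)) h1
    have habs2 := abs_lt.1 (show |dL - dR| < 2 * c by linarith)
    have hzcm1 : -1 < zcrit := by
      rw [hz, lt_div_iff₀ (by linarith : (0:ℝ) < 2 * c)]; linarith [habs2.1]
    have hzc1 : zcrit < 1 := by
      rw [hz, div_lt_one (by linarith : (0:ℝ) < 2 * c)]; linarith [habs2.2]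
    constructor
    · intro hq0
      refine ⟨zcrit, ⟨⟨hzcm1.le, hzc1.le⟩, hq0⟩, ?_⟩
      rintro y ⟨hy, hqy⟩
      have hk := key y
      rw [hqy, hq0] at hk
      have h3 : (y - zcrit) ^ 2 = 0 := by
        have h4 : c / 2 * (y - zcrit) ^ 2 = 0 := by linarith
        rcases mul_eq_zero.1 h4 with h | h
        · exact absurd (by linarith : c = 0) hc
        · exact h
      have h5 : y - zcrit = 0 := by
        have h6 : (y - zcrit) * (y - zcrit) = 0 := by nlinarith
        rcases mul_eq_zero.1 h6 with h | h <;> exact h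
      linarith
    · intro hqneg
      set r := Real.sqrt (-(2 * q zcrit) / c) with hrdef
      have hargpos : 0 < -(2 * q zcrit) / c := by
        apply div_pos (by linarith) hcpos
      have hrpos : 0 < r := Real.sqrt_pos.2 hargpos
      have hr2 : r ^ 2 = -(2 * q zcrit) / c := Real.sq_sqrt hargpos.le
      have hcr : c / 2 * r ^ 2 = -q zcrit := by
        rw [hr2]; field_simp
      have hm1 : dL = c / 2 * (-1 - zcrit) ^ 2 + q zcrit := by rw [← hqm1]; exact key (-1)
      have hp1 : dR = c / 2 * (1 - zcrit) ^ 2 + q zcrit := by rw [← hq1]; exact key 1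
      have hb1 : -1 < zcrit - r := by
        by_contra hcon; push_neg at hcon
        nlinarith [mul_self_le_mul_self (by linarith : (0:ℝ) ≤ 1 + zcrit)
          (by linarith : 1 + zcrit ≤ r), hm1, hcr, hcpos]
      have hb2 : zcrit + r < 1 := by
        by_contra hcon; push_neg at hcon
        nlinarith [mul_self_le_mul_self (by linarith : (0:ℝ) ≤ 1 - zcrit)
          (by linarith : 1 - zcrit ≤ r), hp1, hcr, hcpos]
      have hset : {z ∈ Icc (-1 : ℝ) 1 | q z = 0} = {zcrit - r, zcrit + r} := by
        ext z
        simp only [mem_setOf_eq, mem_insert_iff, mem_singleton_iff, mem_Icc]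
        constructor
        · rintro ⟨⟨hl, hrr⟩, hz0⟩
          have h3 := key z
          rw [hz0] at h3
          have h4 : (z - zcrit - r) * (z - zcrit + r) = 0 := by nlinarith [hcr]
          rcases mul_eq_zero.1 h4 with h | h
          · right; linarith
          · left; linarith
        · rintro (h | h) <;> subst h
          · refine ⟨⟨hb1.le, by linarith⟩, ?_⟩
            have e := key (zcrit - r)
            have heq : (zcrit - r - zcrit) ^ 2 = r ^ 2 := by ring
            rw [heq] at e
            linarith
          · refine ⟨⟨by linarith, hb2.le⟩, ?_⟩
            have e := key (zcrit + r)
            have heq : (zcrit + r - zcrit) ^ 2 = r ^ 2 := by ring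
            rw [heq] at e
            linarith
      rw [hset]
      exact Set.ncard_pair (by intro h; nlinarith)
end

section
/- Consider the planar affine system ż = A_R z + μ(a3R, b3R) where A_R has eigenvalues λ_R ± iω_R with λ_R < 0 and ω_R > 0, a2R > 0, μ = 1, and virtual equilibrium (x_R*, y_R*) with x_R* < 0. Given q > ζ_R := −a3R/a2R, let T_R(q) ∈ (0, π/ω_R) be the first positive time at which the solution starting at (0, q) (which enters x > 0) returns to x = 0, and let P_R(q) be the y-coordinate of the return point. Then q − ζ_R = ξ_R e^{−λ_R T_R} ρ(ω_R T_R; λ_R/ω_R)/sin(ω_R T_R) and P_R(q) − ζ_R = −ξ_R e^{λ_R T_R} ρ(ω_R T_R; −λ_R/ω_R)/sin(ω_R T_R), where ξ_R = β_R ω_R / (a2R (λ_R² + ω_R²)), β_R = a3R b2R − a2R b3R, and ρ(s;ν) = 1 − e^{νs}(cos s − ν sin s). -/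
/-!
Since `A` has trace `2λ` and determinant `λ² + ω²`, the matrix `J = (A - λ)/ω` satisfies
`J² = -1`, so `e^{tA} = e^{λt} (cos ωt + sin ωt · J)`. Writing out that the first coordinate of
`φ_T(0, q)` vanishes and eliminating the equilibrium `z*` by Cramer's rule gives the formula
for `q`. The formula for `P` is the same relation read along the reversed orbit
`φ_{-T}(0, P) = (0, q)`, using `ρ(-s; ν) = ρ(s; -ν)`.
-/

open Matrix Real

/-- The auxiliary function ρ(s; ν) = 1 − e^{νs}(cos s − ν sin s). -/
noncomputable def rho (s ν : ℝ) : ℝ := 1 - Real.exp (ν * s) * (Real.cos s - ν * Real.sin s)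

theorem rho_neg_left (s ν : ℝ) : rho (-s) ν = rho s (-ν) := by
  simp only [rho, cos_neg, sin_neg]
  ring_nf

theorem mul_rho_mul_div {l w : ℝ} (hw : w ≠ 0) (t : ℝ) :
    w * rho (w * t) (l / w) =
      w - w * Real.exp (l * t) * Real.cos (w * t) + l * Real.exp (l * t) * Real.sin (w * t) := by
  rw [rho, show l / w * (w * t) = l * t by field_simp]
  field_simp
  ring

theorem NormedSpace.exp_smul_one_add_smul_of_mul_self_eq_neg_one {𝔸 : Type*} [NormedRing 𝔸]
    [NormedAlgebra ℝ 𝔸] [CompleteSpace 𝔸] {J : 𝔸} (hJ : J * J = -1) (x y : ℝ) :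
    NormedSpace.exp (x • 1 + y • J) = Real.exp x • (Real.cos y • 1 + Real.sin y • J) := by
  let : Algebra ℚ 𝔸 := Algebra.compHom 𝔸 (algebraMap ℚ ℝ)
  -- `z ↦ z.re + z.im • J` is a continuous algebra map `ℂ → 𝔸`, so it commutes with `exp`.
  let f := Complex.liftAux J hJ
  have hf : ∀ z : ℂ, f z = z.re • 1 + z.im • J := fun z => by
    rw [Complex.liftAux_apply, Algebra.algebraMap_eq_smul_one]
  have hc : Continuous f := f.toLinearMap.continuous_of_finiteDimensional
  rw [show x • 1 + y • J = f ⟨x, y⟩ from (hf ⟨x, y⟩).symm, ← NormedSpace.map_exp f hc,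
    ← Complex.exp_eq_exp_ℂ, hf, Complex.exp_re, Complex.exp_im, smul_add, smul_smul, smul_smul]

namespace Matrix

theorem sub_smul_one_mul_self_of_trace_of_det {R : Type*} [CommRing R]
    {A : Matrix (Fin 2) (Fin 2) R} {l w : R} (htr : A.trace = 2 * l)
    (hdet : A.det = l ^ 2 + w ^ 2) :
    (A - l • 1) * (A - l • 1) = -(w ^ 2) • 1 := by
  nontriviality R
  have hCH := A.aeval_self_charpoly
  rw [charpoly_fin_two, htr, hdet] at hCH
  simp only [map_add, map_sub, map_mul, Polynomial.aeval_X_pow, Polynomial.aeval_C,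
    Polynomial.aeval_X, Algebra.algebraMap_eq_smul_one, smul_mul_assoc, one_mul] at hCH
  rw [← sub_eq_zero, ← hCH]
  simp only [sub_mul, mul_sub, smul_mul_assoc, mul_smul_comm, one_mul, mul_one, smul_smul, sq]
  module

theorem exp_smul_of_trace_of_det {A : Matrix (Fin 2) (Fin 2) ℝ} {l w : ℝ} (hw : w ≠ 0)
    (htr : A.trace = 2 * l) (hdet : A.det = l ^ 2 + w ^ 2) (t : ℝ) :
    NormedSpace.exp (t • A) =
      Real.exp (l * t) • (Real.cos (w * t) • 1 + (Real.sin (w * t) / w) • (A - l • 1)) := by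
  let : NormedRing (Matrix (Fin 2) (Fin 2) ℝ) := Matrix.linftyOpNormedRing
  let : NormedAlgebra ℝ (Matrix (Fin 2) (Fin 2) ℝ) := Matrix.linftyOpNormedAlgebra
  have hJ : (w⁻¹ • (A - l • 1)) * (w⁻¹ • (A - l • 1)) = -1 := by
    rw [smul_mul_smul, sub_smul_one_mul_self_of_trace_of_det htr hdet, smul_smul,
      show w⁻¹ * w⁻¹ * -w ^ 2 = -1 by field_simp, neg_one_smul]
  have ht : t • A = (l * t) • 1 + (w * t) • (w⁻¹ • (A - l • 1)) := by
    rw [smul_smul, mul_comm w t, mul_assoc, mul_inv_cancel₀ hw, mul_one, smul_sub, smul_smul]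
    module
  rw [ht]
  refine (NormedSpace.exp_smul_one_add_smul_of_mul_self_eq_neg_one hJ _ _).trans ?_
  rw [smul_smul, div_eq_mul_inv]

end Matrix

noncomputable def affineFlow {n : Type*} [Fintype n] [DecidableEq n] (A : Matrix n n ℝ)
    (zstar : n → ℝ) (t : ℝ) (z : n → ℝ) : n → ℝ :=
  NormedSpace.exp (t • A) *ᵥ (z - zstar) + zstar

theorem affineFlow_neg_affineFlow {n : Type*} [Fintype n] [DecidableEq n] (A : Matrix n n ℝ)
    (zstar : n → ℝ) (t : ℝ) (z : n → ℝ) :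
    affineFlow A zstar (-t) (affineFlow A zstar t z) = z := by
  have hexp : NormedSpace.exp ((-t) • A) * NormedSpace.exp (t • A) = 1 := by
    rw [← Matrix.exp_add_of_commute _ _ (((Commute.refl A).smul_left _).smul_right _),
      neg_smul, neg_add_cancel, NormedSpace.exp_zero]
  simp only [affineFlow, add_sub_cancel_right, mulVec_mulVec, hexp, one_mulVec, sub_add_cancel]

theorem sin_mul_exp_mul_eq_mul_rho_of_affineFlow_fst_eq_zero {a1 a2 a3 b1 b2 b3 l w : ℝ}
    (hw : w ≠ 0) (htr : a1 + b2 = 2 * l) (hdet : a1 * b2 - a2 * b1 = l ^ 2 + w ^ 2)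
    {zstar : Fin 2 → ℝ} (hzstar : !![a1, a2; b1, b2] *ᵥ zstar = -![a3, b3])
    {q t : ℝ} (hret : affineFlow !![a1, a2; b1, b2] zstar t ![0, q] 0 = 0) :
    Real.sin (w * t) * Real.exp (l * t) * (a2 * q + a3) * (l ^ 2 + w ^ 2)
      = (a3 * b2 - a2 * b3) * w * rho (w * t) (l / w) := by
  have hrow0 : a1 * zstar 0 + a2 * zstar 1 = -a3 := by
    simpa [mulVec, dotProduct, Fin.sum_univ_two] using congrFun hzstar 0
  have hrow1 : b1 * zstar 0 + b2 * zstar 1 = -b3 := by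
    simpa [mulVec, dotProduct, Fin.sum_univ_two] using congrFun hzstar 1
  have hcramer : (l ^ 2 + w ^ 2) * zstar 0 = -(a3 * b2 - a2 * b3) := by
    linear_combination b2 * hrow0 - a2 * hrow1 - zstar 0 * hdet
  have hfst : Real.exp (l * t) * (w * Real.cos (w * t) * -zstar 0
      + Real.sin (w * t) * ((a1 - l) * -zstar 0 + a2 * (q - zstar 1))) + w * zstar 0 = 0 := by
    rw [affineFlow, exp_smul_of_trace_of_det hw (by rw [trace_fin_two_of, htr])
      (by rw [det_fin_two_of, hdet])] at hret
    simp only [mulVec_fin_two, Pi.add_apply, Pi.sub_apply, Matrix.add_apply, Matrix.sub_apply,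
      Matrix.smul_apply, smul_eq_mul, of_apply, one_apply_eq, one_apply_ne zero_ne_one,
      one_apply_ne one_ne_zero, cons_val_zero, cons_val_one, cons_val_fin_one, cons_val'] at hret
    field_simp at hret
    linear_combination (norm := ring_nf) hret
  rw [mul_assoc _ w, mul_rho_mul_div hw]
  linear_combination (l ^ 2 + w ^ 2) * hfst + sin (w * t) * rexp (l * t) * (l ^ 2 + w ^ 2) * hrow0
    - (w - w * rexp (l * t) * cos (w * t) + l * rexp (l * t) * sin (w * t)) * hcramer

theorem stmt_11_general (a1R a2R a3R b1R b2R b3R lamR omR : ℝ)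
    (ha2R : a2R > 0) (homR : omR > 0)
    (A : Matrix (Fin 2) (Fin 2) ℝ) (hA : A = !![a1R, a2R; b1R, b2R])
    (htr : a1R + b2R = 2 * lamR)
    (hdet : a1R * b2R - a2R * b1R = lamR ^ 2 + omR ^ 2)
    (zstar : Fin 2 → ℝ) (hzstar : zstar = -(A⁻¹ *ᵥ ![a3R, b3R]))
    (ζR : ℝ) (hζR : ζR = -a3R / a2R)
    (q : ℝ)
    (φ : ℝ → Fin 2 → ℝ)
    (hφ : ∀ t, φ t = NormedSpace.exp (t • A) *ᵥ (![0, q] - zstar) + zstar)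
    (T : ℝ) (hT : T ∈ Set.Ioo 0 (Real.pi / omR))
    (hreturn : φ T 0 = 0)
    (P ξR βR : ℝ) (hP : P = φ T 1)
    (hβR : βR = a3R * b2R - a2R * b3R)
    (hξR : ξR = βR * omR / (a2R * (lamR ^ 2 + omR ^ 2))) :
    q - ζR = ξR * Real.exp (-lamR * T) * rho (omR * T) (lamR / omR)
               / Real.sin (omR * T) ∧
    P - ζR = -ξR * Real.exp (lamR * T) * rho (omR * T) (-lamR / omR)
               / Real.sin (omR * T) := by
  have ha2 : a2R ≠ 0 := ha2R.ne'
  have hd : lamR ^ 2 + omR ^ 2 ≠ 0 := by positivity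
  have hS : Real.sin (omR * T) ≠ 0 := (Real.sin_pos_of_pos_of_lt_pi (mul_pos homR hT.1)
    (by rw [mul_comm, ← lt_div_iff₀ homR]; exact hT.2)).ne'
  subst hA
  have heq : !![a1R, a2R; b1R, b2R] *ᵥ zstar = -![a3R, b3R] := by
    rw [hzstar, mulVec_neg, mulVec_mulVec, mul_nonsing_inv _ (by simp [det_fin_two_of, hdet, hd]),
      one_mulVec]
  have hφT : φ T = affineFlow !![a1R, a2R; b1R, b2R] zstar T ![0, q] := hφ T
  have hendpoint : affineFlow !![a1R, a2R; b1R, b2R] zstar T ![0, q] = ![0, P] := by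
    ext i; fin_cases i
    · exact hφT ▸ hreturn
    · exact (hφT ▸ hP).symm
  have hfwd := sin_mul_exp_mul_eq_mul_rho_of_affineFlow_fst_eq_zero homR.ne' htr hdet heq
    (hφT ▸ hreturn)
  have hbwd := sin_mul_exp_mul_eq_mul_rho_of_affineFlow_fst_eq_zero homR.ne' htr hdet heq
    (q := P) (t := -T) (by rw [← hendpoint, affineFlow_neg_affineFlow]; rfl)
  rw [mul_neg, mul_neg, Real.sin_neg, Real.exp_neg, rho_neg_left, ← neg_div] at hbwd
  subst hζR hξR hβR
  constructor
  · rw [eq_div_iff hS, neg_mul, Real.exp_neg]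
    field_simp
    linear_combination (norm := ring_nf) hfwd
  · rw [eq_div_iff hS]
    field_simp at hbwd ⊢
    linear_combination -hbwd

/-- Implicit formulas for the half-return map `P_R` and return time `T_R`
of the right half-system (with `μ = 1`). -/
theorem stmt_11 (a1R a2R a3R b1R b2R b3R lamR omR : ℝ)
    (ha2R : a2R > 0) (hlamR : lamR < 0) (homR : omR > 0)
    (A : Matrix (Fin 2) (Fin 2) ℝ) (hA : A = !![a1R, a2R; b1R, b2R])
    (htr : a1R + b2R = 2 * lamR)
    (hdet : a1R * b2R - a2R * b1R = lamR ^ 2 + omR ^ 2)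
    (zstar : Fin 2 → ℝ) (hzstar : zstar = -(A⁻¹ *ᵥ ![a3R, b3R]))
    (hvirtual : zstar 0 < 0)
    (ζR : ℝ) (hζR : ζR = -a3R / a2R)
    (q : ℝ) (hq : q > ζR)
    (φ : ℝ → Fin 2 → ℝ)
    (hφ : ∀ t, φ t = NormedSpace.exp (t • A) *ᵥ (![0, q] - zstar) + zstar)
    (T : ℝ) (hT : T ∈ Set.Ioo 0 (Real.pi / omR))
    (hreturn : φ T 0 = 0)
    (hfirst : ∀ t ∈ Set.Ioo 0 T, φ t 0 > 0)
    (P ξR βR : ℝ) (hP : P = φ T 1)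
    (hβR : βR = a3R * b2R - a2R * b3R)
    (hξR : ξR = βR * omR / (a2R * (lamR ^ 2 + omR ^ 2))) :
    q - ζR = ξR * Real.exp (-lamR * T) * rho (omR * T) (lamR / omR)
               / Real.sin (omR * T) ∧
    P - ζR = -ξR * Real.exp (lamR * T) * rho (omR * T) (-lamR / omR)
               / Real.sin (omR * T) :=
  stmt_11_general a1R a2R a3R b1R b2R b3R lamR omR ha2R homR A hA htr hdet zstar hzstar ζR hζR q φ
    hφ T hT hreturn P ξR βR hP hβR hξR
end

section
/- In the setting of the half-return map of the right half-system, with λ_R < 0, ω_R > 0, P_R(q) < ζ_R < q, and T_R(q) defined implicitly by q − ζ_R = ξ_R e^{−λ_R T_R} ρ(ω_R T_R; λ_R/ω_R)/sin(ω_R T_R), the derivative of the return time satisfies dT_R/dq = −e^{λ_R T_R} sin(ω_R T_R) / (ω_R (P_R − ζ_R)); in particular dT_R/dq > 0 for T_R ∈ (0, π/ω_R), so T_R is strictly increasing in q. -/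
/-!
With `ν = λ/ω` and `g(s) = e^{-νs} ρ(s;ν)/sin s`, the relation defining `T` reads
`q - ζ = ξ g(ω T(q))`, and `g'(s) = ρ(s;-ν)/sin² s`. Differentiating in `q` gives
`1 = ξ ω T'(q) ρ(ωT;-ν)/sin²(ωT)`, while the formula for `P` says
`ξ ρ(ωT;-ν) = -(P - ζ) e^{-λT} sin(ωT)`; eliminating `ξ ρ` yields `T'`. Its sign is read off
from `sin(ωT) > 0` on `(0, π/ω)` and `P < ζ`.
-/

open Set Real

open Filter Topology

lemma exp_neg_mul_mul_rho (s ν : ℝ) :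
    exp (-ν * s) * rho s ν = exp (-ν * s) - cos s + ν * sin s := by
  have h : exp (-ν * s) * exp (ν * s) = 1 := by rw [← exp_add]; simp
  unfold rho
  linear_combination (sin s * ν - cos s) * h

lemma hasDerivAt_exp_neg_mul_mul_rho_div_sin (ν s : ℝ) (hs : sin s ≠ 0) :
    HasDerivAt (fun x => exp (-ν * x) * rho x ν / sin x) (rho s (-ν) / sin s ^ 2) s := by
  simp only [exp_neg_mul_mul_rho]
  have hexp : HasDerivAt (fun x => exp (-ν * x)) (exp (-ν * s) * -ν) s := by
    simpa using ((hasDerivAt_id s).const_mul (-ν)).exp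
  have hnum : HasDerivAt (fun x => exp (-ν * x) - cos x + ν * sin x)
      (exp (-ν * s) * -ν - -sin s + ν * cos s) s :=
    (hexp.sub (hasDerivAt_cos s)).add ((hasDerivAt_sin s).const_mul ν)
  refine (hnum.div (hasDerivAt_sin s) hs).congr_deriv ?_
  unfold rho
  field_simp
  linear_combination sin_sq_add_cos_sq s

lemma mul_eq_one_of_comp_eventuallyEq_add_const {f T : ℝ → ℝ} {q d f' c : ℝ}
    (hT : HasDerivAt T d q) (hf : HasDerivAt f f' (T q)) (h : ∀ᶠ x in 𝓝 q, f (T x) = x + c) :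
    f' * d = 1 :=
  ((hf.comp q hT).congr_of_eventuallyEq (h.mono fun _ hx => hx.symm)).unique
    ((hasDerivAt_id q).add_const c)

lemma sin_mul_pos_of_mem_Ioo {ω t : ℝ} (hω : 0 < ω) (ht : t ∈ Ioo 0 (π / ω)) :
    0 < sin (ω * t) := by
  apply sin_pos_of_pos_of_lt_pi (mul_pos hω ht.1)
  calc ω * t < ω * (π / ω) := mul_lt_mul_of_pos_left ht.2 hω
    _ = π := by field_simp

theorem returnTime_deriv_eq {lam ω ξ ζ q p d : ℝ} {T : ℝ → ℝ} (hω : ω ≠ 0)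
    (hs : sin (ω * T q) ≠ 0) (hp : p - ζ ≠ 0) (hT : HasDerivAt T d q)
    (himpT : ∀ᶠ x in 𝓝 q,
      x - ζ = ξ * exp (-lam * T x) * rho (ω * T x) (lam / ω) / sin (ω * T x))
    (himpP : p - ζ = -ξ * exp (lam * T q) * rho (ω * T q) (-lam / ω) / sin (ω * T q)) :
    d = -(exp (lam * T q) * sin (ω * T q)) / (ω * (p - ζ)) := by
  obtain ⟨ν, hν⟩ : ∃ ν, lam / ω = ν := ⟨_, rfl⟩
  have hνω : ∀ t, -lam * t = -ν * (ω * t) := fun t => by rw [← hν]; field_simp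
  rw [hν] at himpT
  rw [neg_div, hν] at himpP
  set g := fun s => exp (-ν * s) * rho s ν / sin s
  have hg : HasDerivAt (fun t => ξ * g (ω * t))
      (ξ * (rho (ω * T q) (-ν) / sin (ω * T q) ^ 2 * ω)) (T q) :=
    (((hasDerivAt_exp_neg_mul_mul_rho_div_sin ν _ hs).comp (T q)
      ((hasDerivAt_id (T q)).const_mul ω)).congr_deriv (by simp)).const_mul ξ
  have hcomp : ∀ᶠ x in 𝓝 q, ξ * g (ω * T x) = x + -ζ :=
    himpT.mono fun x hx => by rw [← sub_eq_add_neg, hx, hνω]; simp only [g]; ring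
  have hchain := mul_eq_one_of_comp_eventuallyEq_add_const hT hg hcomp
  rw [eq_div_iff (mul_ne_zero hω hp), himpP]
  field_simp at hchain ⊢
  linear_combination -hchain

theorem stmt_12_general (lamR omR ξR ζR : ℝ) (homR : omR > 0)
    (T P : ℝ → ℝ)
    (hrange : ∀ q ∈ Ioi ζR, T q ∈ Ioo 0 (Real.pi / omR))
    (horder : ∀ q ∈ Ioi ζR, P q < ζR)
    (himpT : ∀ q ∈ Ioi ζR,
      q - ζR = ξR * Real.exp (-lamR * T q) * rho (omR * T q) (lamR / omR)
                 / Real.sin (omR * T q))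
    (himpP : ∀ q ∈ Ioi ζR,
      P q - ζR = -ξR * Real.exp (lamR * T q) * rho (omR * T q) (-lamR / omR)
                 / Real.sin (omR * T q))
    (hdiff : ∀ q ∈ Ioi ζR, DifferentiableAt ℝ T q) :
    (∀ q ∈ Ioi ζR,
      HasDerivAt T
        (-(Real.exp (lamR * T q) * Real.sin (omR * T q)) / (omR * (P q - ζR))) q) ∧
    (∀ q ∈ Ioi ζR,
      -(Real.exp (lamR * T q) * Real.sin (omR * T q)) / (omR * (P q - ζR)) > 0) ∧
    StrictMonoOn T (Ioi ζR) := by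
  have hsin q (hq : q ∈ Ioi ζR) : 0 < sin (omR * T q) :=
    sin_mul_pos_of_mem_Ioo homR (hrange q hq)
  have hP q (hq : q ∈ Ioi ζR) : P q - ζR < 0 := sub_neg.2 (horder q hq)
  have hderiv q (hq : q ∈ Ioi ζR) : HasDerivAt T
      (-(exp (lamR * T q) * sin (omR * T q)) / (omR * (P q - ζR))) q := by
    have hT := (hdiff q hq).hasDerivAt
    rwa [returnTime_deriv_eq homR.ne' (hsin q hq).ne' (hP q hq).ne hT
      (eventually_of_mem (isOpen_Ioi.mem_nhds hq) himpT)
      (himpP q hq)] at hT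
  have hpos q (hq : q ∈ Ioi ζR) :
      -(exp (lamR * T q) * sin (omR * T q)) / (omR * (P q - ζR)) > 0 :=
    div_pos_of_neg_of_neg (neg_neg_of_pos (mul_pos (exp_pos _) (hsin q hq)))
      (mul_neg_of_pos_of_neg homR (hP q hq))
  refine ⟨hderiv, hpos, strictMonoOn_of_deriv_pos (convex_Ioi ζR)
    (fun q hq => (hderiv q hq).continuousAt.continuousWithinAt) fun q hq => ?_⟩
  rw [interior_Ioi] at hq
  exact (hderiv q hq).deriv ▸ hpos q hq

/-- Derivative of the return time: `dT_R/dq = −e^{λ_R T_R} sin(ω_R T_R)/(ω_R (P_R − ζ_R))`,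
which is positive, so `T_R` is strictly increasing. -/
theorem stmt_12 (lamR omR ξR ζR : ℝ) (hlamR : lamR < 0) (homR : omR > 0)
    (T P : ℝ → ℝ)
    (hrange : ∀ q ∈ Ioi ζR, T q ∈ Ioo 0 (Real.pi / omR))
    (horder : ∀ q ∈ Ioi ζR, P q < ζR)
    (himpT : ∀ q ∈ Ioi ζR,
      q - ζR = ξR * Real.exp (-lamR * T q) * rho (omR * T q) (lamR / omR)
                 / Real.sin (omR * T q))
    (himpP : ∀ q ∈ Ioi ζR,
      P q - ζR = -ξR * Real.exp (lamR * T q) * rho (omR * T q) (-lamR / omR)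
                 / Real.sin (omR * T q))
    (hdiff : ∀ q ∈ Ioi ζR, DifferentiableAt ℝ T q) :
    (∀ q ∈ Ioi ζR,
      HasDerivAt T
        (-(Real.exp (lamR * T q) * Real.sin (omR * T q)) / (omR * (P q - ζR))) q) ∧
    (∀ q ∈ Ioi ζR,
      -(Real.exp (lamR * T q) * Real.sin (omR * T q)) / (omR * (P q - ζR)) > 0) ∧
    StrictMonoOn T (Ioi ζR) :=
  stmt_12_general lamR omR ξR ζR homR T P hrange horder himpT himpP hdiff
end

section
/- In the setting of the half-return map P_R with T_R ∈ (0, π/ω_R), the derivative satisfies dP_R/dq = −ρ(ω_R T_R; λ_R/ω_R)/ρ(ω_R T_R; −λ_R/ω_R) = ((q − ζ_R)/(P_R − ζ_R)) e^{2 λ_R T_R}; in particular, since P_R(q) < ζ_R < q, we have dP_R/dq < 0, i.e., P_R is strictly decreasing. -/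
/-!
Let `F = startOffset` and `G = returnOffset` be the right-hand sides of the implicit equations, so that
`q - ζ_R = F (T q)` and `P q - ζ_R = G (T q)`. Expanding `ρ`, both are `ξ_R / sin (ω t)` times
an expression linear in `e^{±λt}`, `cos (ω t)`, `sin (ω t)`, and a direct computation gives
`G G' = e^{2λt} F F'`. Differentiating the two equations along `T` gives `F'(T q) T'(q) = 1` and
`P'(q) = G'(T q) T'(q)`, hence `P'(q) (P q - ζ_R) = e^{2λT} (q - ζ_R)`; the sign then comes from
`P q < ζ_R < q`.
-/

open Set Real

open Filter Topology

theorem hasDerivAt_of_sub_eq_comp {F G T P : ℝ → ℝ} {F' G' T' c k q : ℝ}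
    (hT : HasDerivAt T T' q) (hF : HasDerivAt F F' (T q)) (hG : HasDerivAt G G' (T q))
    (hFT : ∀ᶠ x in 𝓝 q, x - c = F (T x)) (hGT : ∀ᶠ x in 𝓝 q, P x - c = G (T x))
    (hGF : G (T q) * G' = k * (F (T q) * F')) (hPq : P q ≠ c) :
    HasDerivAt P ((q - c) / (P q - c) * k) q := by
  have hone : F' * T' = 1 :=
    ((hF.comp q hT).congr_of_eventuallyEq hFT).unique ((hasDerivAt_id q).sub_const c)
  have hP : HasDerivAt P (G' * T') q :=
    ((hG.comp q hT).const_add c).congr_of_eventuallyEq (hGT.mono fun _ hx => eq_add_of_sub_eq' hx)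
  have hG0 : G (T q) ≠ 0 := hGT.self_of_nhds ▸ sub_ne_zero.2 hPq
  refine hP.congr_deriv ?_
  rw [hFT.self_of_nhds, hGT.self_of_nhds]
  field_simp
  linear_combination T' * hGF + k * F (T q) * hone

theorem exp_mul_exp_neg (x : ℝ) : exp x * exp (-x) = 1 := by
  rw [← exp_add, add_neg_cancel, exp_zero]

theorem exp_two_mul_mul (a t : ℝ) : exp (2 * a * t) = exp (a * t) ^ 2 := by
  rw [← exp_nat_mul]; ring_nf

section HalfReturn

variable (lam om ξ : ℝ)

noncomputable def startOffset (t : ℝ) : ℝ :=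
  ξ * exp (-lam * t) * rho (om * t) (lam / om) / sin (om * t)

noncomputable def returnOffset (t : ℝ) : ℝ :=
  -ξ * exp (lam * t) * rho (om * t) (-lam / om) / sin (om * t)

variable {lam om ξ}

theorem rho_mul_div (hom : om ≠ 0) (t : ℝ) :
    rho (om * t) (lam / om) = 1 - exp (lam * t) * (cos (om * t) - lam / om * sin (om * t)) := by
  have h : lam / om * (om * t) = lam * t := by field_simp
  rw [rho, h]

theorem startOffset_eq (hom : om ≠ 0) (t : ℝ) :
    startOffset lam om ξ t =
      ξ * (exp (-lam * t) - cos (om * t) + lam / om * sin (om * t)) / sin (om * t) := by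
  rw [startOffset, rho_mul_div hom, neg_mul]
  congr 1
  linear_combination (-ξ * (cos (om * t) - lam / om * sin (om * t))) * exp_mul_exp_neg (lam * t)

theorem returnOffset_eq (hom : om ≠ 0) (t : ℝ) :
    returnOffset lam om ξ t =
      ξ * (cos (om * t) + lam / om * sin (om * t) - exp (lam * t)) / sin (om * t) := by
  rw [returnOffset, rho_mul_div hom, neg_mul lam, neg_mul, neg_div]
  congr 1
  linear_combination (ξ * (cos (om * t) + lam / om * sin (om * t))) * exp_mul_exp_neg (lam * t)

theorem hasDerivAt_startOffset (hom : om ≠ 0) {t : ℝ} (hs : sin (om * t) ≠ 0) :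
    HasDerivAt (startOffset lam om ξ)
      (ξ * (om - exp (-lam * t) * (lam * sin (om * t) + om * cos (om * t))) / sin (om * t) ^ 2) t := by
  have hlin : HasDerivAt (om * ·) om t := by simpa using (hasDerivAt_id t).const_mul om
  have hexp : HasDerivAt (fun u => exp (-lam * u)) (exp (-lam * t) * -lam) t := by
    simpa using ((hasDerivAt_id t).const_mul (-lam)).exp
  have hnum := ((hexp.sub hlin.cos).add (hlin.sin.const_mul (lam / om))).const_mul ξ
  rw [funext (startOffset_eq hom)]
  refine (hnum.div hlin.sin hs).congr_deriv ?_
  simp only [Pi.add_apply, Pi.sub_apply]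
  field_simp
  congr 1
  have hpy := Real.sin_sq_add_cos_sq (t * om)
  linear_combination (ξ * om) * hpy

theorem hasDerivAt_returnOffset (hom : om ≠ 0) {t : ℝ} (hs : sin (om * t) ≠ 0) :
    HasDerivAt (returnOffset lam om ξ)
      (ξ * (exp (lam * t) * (om * cos (om * t) - lam * sin (om * t)) - om) / sin (om * t) ^ 2) t := by
  have hlin : HasDerivAt (om * ·) om t := by simpa using (hasDerivAt_id t).const_mul om
  have hexp : HasDerivAt (fun u => exp (lam * u)) (exp (lam * t) * lam) t := by
    simpa using ((hasDerivAt_id t).const_mul lam).exp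
  have hnum := ((hlin.cos.add (hlin.sin.const_mul (lam / om))).sub hexp).const_mul ξ
  rw [funext (returnOffset_eq hom)]
  refine (hnum.div hlin.sin hs).congr_deriv ?_
  simp only [Pi.add_apply, Pi.sub_apply]
  field_simp
  congr 1
  have hpy := Real.sin_sq_add_cos_sq (om * t)
  linear_combination (-om) * hpy

theorem returnOffset_mul_deriv (hom : om ≠ 0) {t : ℝ} (hs : sin (om * t) ≠ 0) :
    returnOffset lam om ξ t *
        (ξ * (exp (lam * t) * (om * cos (om * t) - lam * sin (om * t)) - om) / sin (om * t) ^ 2) =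
      exp (2 * lam * t) * (startOffset lam om ξ t *
        (ξ * (om - exp (-lam * t) * (lam * sin (om * t) + om * cos (om * t))) / sin (om * t) ^ 2)) := by
  rw [startOffset_eq hom, returnOffset_eq hom, exp_two_mul_mul, neg_mul, exp_neg]
  field_simp
  ring

theorem startOffset_div_returnOffset_mul_exp (hξ : ξ ≠ 0) {t : ℝ} (hs : sin (om * t) ≠ 0) :
    startOffset lam om ξ t / returnOffset lam om ξ t * exp (2 * lam * t) =
      -(rho (om * t) (lam / om) / rho (om * t) (-lam / om)) := by
  rw [startOffset, returnOffset, div_div_div_cancel_right₀ hs, mul_div_mul_comm,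
    exp_two_mul_mul, neg_mul, exp_neg]
  field_simp

end HalfReturn

theorem stmt_13_general (lamR omR ξR ζR : ℝ) (homR : omR > 0) (hξR : ξR > 0)
    (T P : ℝ → ℝ)
    (hrange : ∀ q ∈ Ioi ζR, T q ∈ Ioo 0 (Real.pi / omR))
    (horder : ∀ q ∈ Ioi ζR, P q < ζR)
    (himpT : ∀ q ∈ Ioi ζR,
      q - ζR = ξR * Real.exp (-lamR * T q) * rho (omR * T q) (lamR / omR)
                 / Real.sin (omR * T q))
    (himpP : ∀ q ∈ Ioi ζR,
      P q - ζR = -ξR * Real.exp (lamR * T q) * rho (omR * T q) (-lamR / omR)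
                 / Real.sin (omR * T q))
    (hdiff : ∀ q ∈ Ioi ζR, DifferentiableAt ℝ T q) :
    (∀ q ∈ Ioi ζR,
      HasDerivAt P ((q - ζR) / (P q - ζR) * Real.exp (2 * lamR * T q)) q) ∧
    (∀ q ∈ Ioi ζR,
      (q - ζR) / (P q - ζR) * Real.exp (2 * lamR * T q) =
        -(rho (omR * T q) (lamR / omR) / rho (omR * T q) (-lamR / omR))) ∧
    (∀ q ∈ Ioi ζR,
      (q - ζR) / (P q - ζR) * Real.exp (2 * lamR * T q) < 0) ∧
    StrictAntiOn P (Ioi ζR) := by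
  have hom : omR ≠ 0 := homR.ne'
  have hsin : ∀ q ∈ Ioi ζR, sin (omR * T q) ≠ 0 := fun q hq => by
    obtain ⟨hT0, hTπ⟩ := hrange q hq
    refine (sin_pos_of_pos_of_lt_pi (by positivity) ?_).ne'
    rwa [lt_div_iff₀ homR, mul_comm] at hTπ
  have hderiv (q : ℝ) (hq : q ∈ Ioi ζR) :
      HasDerivAt P ((q - ζR) / (P q - ζR) * exp (2 * lamR * T q)) q :=
    hasDerivAt_of_sub_eq_comp (hdiff q hq).hasDerivAt
      (hasDerivAt_startOffset hom (hsin q hq)) (hasDerivAt_returnOffset hom (hsin q hq))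
      (eventually_of_mem (Ioi_mem_nhds hq) himpT) (eventually_of_mem (Ioi_mem_nhds hq) himpP)
      (returnOffset_mul_deriv hom (hsin q hq)) (horder q hq).ne
  have hneg (q : ℝ) (hq : q ∈ Ioi ζR) : (q - ζR) / (P q - ζR) * exp (2 * lamR * T q) < 0 :=
    mul_neg_of_neg_of_pos (div_neg_of_pos_of_neg (sub_pos.2 hq) (sub_neg.2 (horder q hq)))
      (exp_pos _)
  refine ⟨hderiv, fun q hq => ?_, hneg, ?_⟩
  · rw [himpT q hq, himpP q hq]
    exact startOffset_div_returnOffset_mul_exp hξR.ne' (hsin q hq)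
  · refine strictAntiOn_of_deriv_neg (convex_Ioi ζR)
      (fun x hx => (hderiv x hx).continuousAt.continuousWithinAt) fun x hx => ?_
    rw [interior_Ioi] at hx
    exact (hderiv x hx).deriv ▸ hneg x hx

/-- Derivative of the half-return map:
`dP_R/dq = −ρ(ω T; λ/ω)/ρ(ω T; −λ/ω) = ((q−ζ_R)/(P_R−ζ_R)) e^{2λT}`, which is negative,
so `P_R` is strictly decreasing. -/
theorem stmt_13 (lamR omR ξR ζR : ℝ) (hlamR : lamR < 0) (homR : omR > 0) (hξR : ξR > 0)
    (T P : ℝ → ℝ)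
    (hrange : ∀ q ∈ Ioi ζR, T q ∈ Ioo 0 (Real.pi / omR))
    (horder : ∀ q ∈ Ioi ζR, P q < ζR)
    (himpT : ∀ q ∈ Ioi ζR,
      q - ζR = ξR * Real.exp (-lamR * T q) * rho (omR * T q) (lamR / omR)
                 / Real.sin (omR * T q))
    (himpP : ∀ q ∈ Ioi ζR,
      P q - ζR = -ξR * Real.exp (lamR * T q) * rho (omR * T q) (-lamR / omR)
                 / Real.sin (omR * T q))
    (hdiff : ∀ q ∈ Ioi ζR, DifferentiableAt ℝ T q) :
    (∀ q ∈ Ioi ζR,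
      HasDerivAt P ((q - ζR) / (P q - ζR) * Real.exp (2 * lamR * T q)) q) ∧
    (∀ q ∈ Ioi ζR,
      (q - ζR) / (P q - ζR) * Real.exp (2 * lamR * T q) =
        -(rho (omR * T q) (lamR / omR) / rho (omR * T q) (-lamR / omR))) ∧
    (∀ q ∈ Ioi ζR,
      (q - ζR) / (P q - ζR) * Real.exp (2 * lamR * T q) < 0) ∧
    StrictAntiOn P (Ioi ζR) :=
  stmt_13_general lamR omR ξR ζR homR hξR T P hrange horder himpT himpP hdiff
end

section
/- Let P : (ζ_R, ∞) → ℝ be a C² map with ζ_R ≤ ζ_L, P(q) > ζ_L for all q, lim_{q→ζ_R⁺} P(q) > ζ_L, and suppose at every fixed point q of P, P'(q) = G(q) where G(q) = [(q−ζ_R)(P_R(q)−ζ_L)]/[(P_R(q)−ζ_R)(q−ζ_L)] e^{2h(q)} with P_R(q) < ζ_R, P_R strictly decreasing, h strictly decreasing, and G > 0 with G strictly decreasing. Then P has at most one fixed point in (ζ_R, ∞), and if a fixed point q* exists then P'(q*) < 1 (so q* is asymptotically stable). -/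
/-!
Put `H = P - id`. Since `H > 0` near `ζR`, there is a first fixed point `q*`, and `H > 0` on
`(ζR, q*)` forces `P'(q*) ≤ 1`. Writing `P' = G · (q - ζL) / (P - ζL)`, at a fixed point with
`P' = 1` the second factor has derivative `0`, so `P'' = G' < 0` and `q*` would be a local
maximum of `H`; hence `P'(q*) < 1`. As `P' = G` at fixed points and `G` is strictly decreasing,
`P' < 1` at every fixed point, so every zero of `H` is a transversal down-crossing, and a
continuous function all of whose zeros are down-crossings has at most one zero.
-/

open Set Filter Real Topology

section SignNearZero

variable {f : ℝ → ℝ} {x₀ : ℝ}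

lemma eventually_neg_left_of_deriv_pos (hf : 0 < deriv f x₀) (hx : f x₀ = 0) :
    ∀ᶠ x in 𝓝[<] x₀, f x < 0 := by
  filter_upwards [nhdsWithin_le_nhds (eventually_nhdsWithin_sign_eq_of_deriv_pos hf hx),
    self_mem_nhdsWithin] with x hsign (hx : x < x₀)
  rwa [sign_eq_neg_one_iff.mpr (sub_neg.mpr hx), sign_eq_neg_one_iff] at hsign

lemma eventually_pos_left_of_deriv_neg (hf : deriv f x₀ < 0) (hx : f x₀ = 0) :
    ∀ᶠ x in 𝓝[<] x₀, 0 < f x := by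
  filter_upwards [nhdsWithin_le_nhds (eventually_nhdsWithin_sign_eq_of_deriv_neg hf hx),
    self_mem_nhdsWithin] with x hsign (hx : x < x₀)
  rwa [sign_eq_one_iff.mpr (sub_pos.mpr hx), sign_eq_one_iff] at hsign

lemma eventually_neg_right_of_deriv_neg (hf : deriv f x₀ < 0) (hx : f x₀ = 0) :
    ∀ᶠ x in 𝓝[>] x₀, f x < 0 := by
  filter_upwards [nhdsWithin_le_nhds (eventually_nhdsWithin_sign_eq_of_deriv_neg hf hx),
    self_mem_nhdsWithin] with x hsign (hx : x₀ < x)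
  rwa [sign_eq_neg_one_iff.mpr (sub_neg.mpr hx), sign_eq_neg_one_iff] at hsign

lemma deriv_nonpos_of_eventually_pos_left (hx : f x₀ = 0)
    (hleft : ∀ᶠ x in 𝓝[<] x₀, 0 < f x) : deriv f x₀ ≤ 0 := by
  by_contra! hpos
  obtain ⟨x, hneg, hpos⟩ := ((eventually_neg_left_of_deriv_pos hpos hx).and hleft).exists
  exact hneg.not_gt hpos

lemma deriv_deriv_nonneg_of_eventually_pos_left (hx : f x₀ = 0)
    (hleft : ∀ᶠ x in 𝓝[<] x₀, 0 < f x) (hd : deriv f x₀ = 0) (hc : ContinuousAt f x₀) :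
    0 ≤ deriv (deriv f) x₀ := by
  by_contra! hneg
  have hmax : ∀ᶠ x in 𝓝[<] x₀, f x ≤ f x₀ :=
    nhdsWithin_le_nhds (isLocalMax_of_deriv_deriv_neg hneg hd hc)
  obtain ⟨x, hle, hpos⟩ := (hmax.and hleft).exists
  exact (hx ▸ hle).not_gt hpos

end SignNearZero

lemma exists_first_zero_of_pos {H : ℝ → ℝ} {b c : ℝ} (hbc : b ≤ c)
    (hcont : ContinuousOn H (Icc b c)) (hb : 0 < H b) (hc : H c = 0) :
    ∃ z ∈ Ioc b c, H z = 0 ∧ ∀ x ∈ Ico b z, 0 < H x := by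
  set S := Icc b c ∩ H ⁻¹' {0}
  have hS : IsCompact S := isCompact_Icc.of_isClosed_subset
    (hcont.preimage_isClosed_of_isClosed isClosed_Icc isClosed_singleton) inter_subset_left
  obtain ⟨⟨hbz, hzc⟩, hz⟩ : sInf S ∈ S := hS.sInf_mem ⟨c, right_mem_Icc.mpr hbc, hc⟩
  have hbz' : b < sInf S := hbz.lt_of_ne fun h => hb.ne' (h ▸ hz)
  refine ⟨sInf S, ⟨hbz', hzc⟩, hz, fun x ⟨hbx, hxz⟩ => ?_⟩
  by_contra! hx
  obtain ⟨y, ⟨hby, hyx⟩, hy⟩ : (0 : ℝ) ∈ H '' Icc b x :=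
    intermediate_value_Icc' hbx (hcont.mono (Icc_subset_Icc_right (hxz.le.trans hzc)))
      ⟨hx, hb.le⟩
  have : sInf S ≤ y := csInf_le hS.bddBelow ⟨⟨hby, hyx.trans (hxz.le.trans hzc)⟩, hy⟩
  linarith

lemma exists_first_zero_of_eventually_pos {H : ℝ → ℝ} {a q₀ : ℝ}
    (hcont : ContinuousOn H (Ioi a)) (hpos : ∀ᶠ x in 𝓝[>] a, 0 < H x) (hq₀ : a < q₀)
    (h0 : H q₀ = 0) : ∃ q ∈ Ioc a q₀, H q = 0 ∧ ∀ x ∈ Ioo a q, 0 < H x := by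
  obtain ⟨b, hab, hb⟩ := mem_nhdsGT_iff_exists_Ioc_subset.mp (hpos.and (Ioo_mem_nhdsGT hq₀))
  obtain ⟨hHb, -, hbq₀⟩ := hb ⟨hab, le_rfl⟩
  obtain ⟨q, ⟨hbq, hqq₀⟩, hq, hpos'⟩ :=
    exists_first_zero_of_pos hbq₀.le (hcont.mono fun x hx => hab.trans_le hx.1) hHb h0
  refine ⟨q, ⟨hab.trans hbq, hqq₀⟩, hq, fun x ⟨hax, hxq⟩ => ?_⟩
  rcases le_or_gt x b with hxb | hbx
  · exact (hb ⟨hax, hxb⟩).1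
  · exact hpos' x ⟨hbx.le, hxq⟩

lemma eq_of_deriv_neg_at_zeros {H : ℝ → ℝ} {a c : ℝ} (hac : a ≤ c)
    (hcont : ContinuousOn H (Icc a c)) (ha : H a = 0) (hc : H c = 0)
    (hd : ∀ x ∈ Icc a c, H x = 0 → deriv H x < 0) : a = c := by
  by_contra hne
  have hac' : a < c := hac.lt_of_ne hne
  obtain ⟨y, hy, hay, hyc⟩ := ((eventually_neg_right_of_deriv_neg
    (hd a (left_mem_Icc.mpr hac) ha) ha).and (Ioo_mem_nhdsGT hac')).exists
  obtain ⟨z, ⟨hyz, hzc⟩, hz, hneg⟩ := exists_first_zero_of_pos (H := fun x => -H x) hyc.le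
    (hcont.mono (Icc_subset_Icc_left hay.le)).neg (neg_pos.mpr hy) (neg_eq_zero.mpr hc)
  rw [neg_eq_zero] at hz
  obtain ⟨x, hx, hyx, hxz⟩ := ((eventually_pos_left_of_deriv_neg
    (hd z ⟨hay.le.trans hyz.le, hzc⟩ hz) hz).and (Ioo_mem_nhdsLT hyz)).exists
  linarith [hneg x ⟨hyx.le, hxz⟩]

lemma eq_of_fixed_of_deriv_lt_one {P : ℝ → ℝ} {a : ℝ}
    (hPd : ∀ x ∈ Ioi a, DifferentiableAt ℝ P x)
    (hstable : ∀ q ∈ Ioi a, P q = q → deriv P q < 1) {q₁ q₂ : ℝ} (h₁ : q₁ ∈ Ioi a)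
    (h₂ : q₂ ∈ Ioi a) (hf₁ : P q₁ = q₁) (hf₂ : P q₂ = q₂) : q₁ = q₂ := by
  wlog hle : q₁ ≤ q₂ generalizing q₁ q₂
  · exact (this h₂ h₁ hf₂ hf₁ (le_of_not_ge hle)).symm
  have hsub : Icc q₁ q₂ ⊆ Ioi a := fun x hx => h₁.trans_le hx.1
  refine eq_of_deriv_neg_at_zeros (H := fun x => P x - x) hle
    (fun x hx => ((hPd x (hsub hx)).continuousAt.sub continuousAt_id).continuousWithinAt)
    (sub_eq_zero.mpr hf₁) (sub_eq_zero.mpr hf₂) fun x hx hx0 => ?_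
  have hH : HasDerivAt (fun y => P y - y) (deriv P x - 1) x :=
    (hPd x (hsub hx)).hasDerivAt.sub (hasDerivAt_id' x)
  rw [hH.deriv]
  linarith [hstable x (hsub hx) (sub_eq_zero.mp hx0)]

lemma hasDerivAt_sub_div_sub_of_fixed {P : ℝ → ℝ} {q c : ℝ} (hP : HasDerivAt P 1 q)
    (hfix : P q = q) (hqc : q ≠ c) : HasDerivAt (fun x => (x - c) / (P x - c)) 0 q := by
  have := ((hasDerivAt_id q).sub_const c).div (hP.sub_const c) (by rwa [hfix, sub_ne_zero])
  rwa [hfix, id, one_mul, mul_one, sub_self, zero_div] at this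

lemma deriv_lt_one_of_fixed_of_lt_left {P G : ℝ → ℝ} {q c g : ℝ}
    (hPd : ∀ᶠ x in 𝓝 q, DifferentiableAt ℝ P x) (hfix : P q = q)
    (hleft : ∀ᶠ x in 𝓝[<] q, x < P x)
    (hderiv : ∀ᶠ x in 𝓝 q, deriv P x = G x * ((x - c) / (P x - c)))
    (hG : HasDerivAt G g q) (hg : g < 0) (hqc : q ≠ c) : deriv P q < 1 := by
  set H := fun x => P x - x
  have hderivH : ∀ᶠ x in 𝓝 q, deriv H x = deriv P x - 1 := by
    filter_upwards [hPd] with x hx using (hx.hasDerivAt.sub (hasDerivAt_id x)).deriv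
  have hH0 : H q = 0 := sub_eq_zero.mpr hfix
  have hHleft : ∀ᶠ x in 𝓝[<] q, 0 < H x := by
    filter_upwards [hleft] with x hx using sub_pos.mpr hx
  have hle : deriv P q ≤ 1 := by
    linarith [hderivH.self_of_nhds, deriv_nonpos_of_eventually_pos_left hH0 hHleft]
  refine hle.lt_of_ne fun h1 => ?_
  have hH2 : HasDerivAt (deriv H) g q := by
    have := (hG.mul (hasDerivAt_sub_div_sub_of_fixed (h1 ▸ hPd.self_of_nhds.hasDerivAt)
      hfix hqc)).sub_const 1
    rw [hfix, div_self (sub_ne_zero.mpr hqc), mul_one, mul_zero, add_zero] at this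
    refine this.congr_of_eventuallyEq ?_
    filter_upwards [hderivH, hderiv] with x hx hx'
    rw [hx, hx', Pi.mul_apply]
  have hHc : ContinuousAt H q := hPd.self_of_nhds.continuousAt.sub continuousAt_id
  have := deriv_deriv_nonneg_of_eventually_pos_left hH0 hHleft
    (by rw [hderivH.self_of_nhds, h1, sub_self]) hHc
  rw [hH2.deriv] at this
  linarith

lemma exists_hasDerivAt_mul_mul_neg {f₁ f₂ f₃ : ℝ → ℝ} {d₁ d₂ d₃ x : ℝ}
    (h₁ : HasDerivAt f₁ d₁ x) (h₂ : HasDerivAt f₂ d₂ x) (h₃ : HasDerivAt f₃ d₃ x)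
    (hf₁ : 0 < f₁ x) (hf₂ : 0 < f₂ x) (hf₃ : 0 < f₃ x) (hd₁ : d₁ ≤ 0) (hd₂ : d₂ ≤ 0)
    (hd₃ : d₃ < 0) : ∃ d < 0, HasDerivAt (fun y => f₁ y * f₂ y * f₃ y) d x := by
  refine ⟨_, ?_, (h₁.mul h₂).mul h₃⟩
  have h₁₂ : d₁ * f₂ x + f₁ x * d₂ ≤ 0 :=
    add_nonpos (mul_nonpos_of_nonpos_of_nonneg hd₁ hf₂.le)
      (mul_nonpos_of_nonneg_of_nonpos hf₁.le hd₂)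
  exact add_neg_of_nonpos_of_neg (mul_nonpos_of_nonpos_of_nonneg h₁₂ hf₃.le)
    (mul_neg_of_pos_of_neg (mul_pos hf₁ hf₂) hd₃)

/-- The paper's `G`, factored into three factors that are positive and nonincreasing on
`(ζL, ∞)`, the last one strictly decreasing. -/
noncomputable def fixedPointSlope (ζR ζL : ℝ) (PR h : ℝ → ℝ) (q : ℝ) : ℝ :=
  (q - ζR) / (q - ζL) * ((PR q - ζL) / (PR q - ζR)) * exp (2 * h q)

section FixedPointSlope

variable {ζR ζL : ℝ} {PR h : ℝ → ℝ}

lemma fixedPointSlope_eq (q : ℝ) : fixedPointSlope ζR ζL PR h q =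
    (q - ζR) * (PR q - ζL) / ((PR q - ζR) * (q - ζL)) * exp (2 * h q) := by
  simp only [fixedPointSlope, div_eq_mul_inv, mul_inv]
  ring

lemma fixedPointSlope_mul_div {q p : ℝ} (hq : q ≠ ζL) :
    fixedPointSlope ζR ζL PR h q * ((q - ζL) / (p - ζL)) =
      (q - ζR) * (PR q - ζL) / ((PR q - ζR) * (p - ζL)) * exp (2 * h q) := by
  have hqL : q - ζL ≠ 0 := sub_ne_zero.mpr hq
  rw [fixedPointSlope]
  field_simp

lemma exists_hasDerivAt_fixedPointSlope_neg (hζ : ζR ≤ ζL) {q : ℝ} (hq : ζL < q)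
    (hPR : DifferentiableAt ℝ PR q) (hh : DifferentiableAt ℝ h q) (hPRq : PR q < ζR)
    (hPR' : deriv PR q < 0) (hh' : deriv h q < 0) :
    ∃ d < 0, HasDerivAt (fixedPointSlope ζR ζL PR h) d q := by
  refine exists_hasDerivAt_mul_mul_neg
    (((hasDerivAt_id' q).sub_const ζR).div ((hasDerivAt_id' q).sub_const ζL)
      (sub_ne_zero.mpr hq.ne'))
    ((hPR.hasDerivAt.sub_const ζL).div (hPR.hasDerivAt.sub_const ζR) (sub_ne_zero.mpr hPRq.ne))
    (hh.hasDerivAt.const_mul 2).exp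
    (div_pos (sub_pos.mpr (hζ.trans_lt hq)) (sub_pos.mpr hq))
    (div_pos_of_neg_of_neg (by linarith) (by linarith)) (exp_pos _)
    (div_nonpos_of_nonpos_of_nonneg (by linarith) (sq_nonneg _))
    (div_nonpos_of_nonpos_of_nonneg ?_ (sq_nonneg _))
    (mul_neg_of_pos_of_neg (exp_pos _) (by linarith))
  have : deriv PR q * (PR q - ζR) - (PR q - ζL) * deriv PR q = deriv PR q * (ζL - ζR) := by
    ring
  rw [this]
  exact mul_nonpos_of_nonpos_of_nonneg hPR'.le (sub_nonneg.mpr hζ)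

lemma strictAntiOn_fixedPointSlope (hζ : ζR ≤ ζL)
    (hPR : ∀ q ∈ Ioi ζR, DifferentiableAt ℝ PR q) (hh : ∀ q ∈ Ioi ζR, DifferentiableAt ℝ h q)
    (hPRlt : ∀ q ∈ Ioi ζR, PR q < ζR) (hPR' : ∀ q ∈ Ioi ζR, deriv PR q < 0)
    (hh' : ∀ q ∈ Ioi ζR, deriv h q < 0) :
    StrictAntiOn (fixedPointSlope ζR ζL PR h) (Ioi ζL) := by
  have hd : ∀ q ∈ Ioi ζL, ∃ d < 0, HasDerivAt (fixedPointSlope ζR ζL PR h) d q := fun q hq =>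
    have hqR : q ∈ Ioi ζR := hζ.trans_lt hq
    exists_hasDerivAt_fixedPointSlope_neg hζ hq (hPR q hqR) (hh q hqR) (hPRlt q hqR)
      (hPR' q hqR) (hh' q hqR)
  refine strictAntiOn_of_deriv_neg (convex_Ioi ζL)
    (fun q hq => (hd q hq).choose_spec.2.continuousAt.continuousWithinAt) fun q hq => ?_
  obtain ⟨d, hd, hG⟩ := hd q (interior_subset hq)
  rwa [hG.deriv]

end FixedPointSlope

/-- Steps 6–7 of the proof of Theorem 2.1: under the derivative formula for the
Poincaré map `P`, `P` has at most one fixed point, and at any fixed point `P' < 1`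
(asymptotic stability). -/
theorem stmt_17 (ζR ζL : ℝ) (hζ : ζR ≤ ζL)
    (P PR h : ℝ → ℝ)
    (hP2 : ContDiffOn ℝ 2 P (Ioi ζR))
    (hPRdiff : ∀ q ∈ Ioi ζR, DifferentiableAt ℝ PR q)
    (hhdiff : ∀ q ∈ Ioi ζR, DifferentiableAt ℝ h q)
    (hPgt : ∀ q ∈ Ioi ζR, P q > ζL)
    (hlim : ∃ Lval : ℝ, Lval > ζL ∧ Tendsto P (nhdsWithin ζR (Ioi ζR)) (nhds Lval))
    (hPRlt : ∀ q ∈ Ioi ζR, PR q < ζR)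
    (hPR' : ∀ q ∈ Ioi ζR, deriv PR q < 0)
    (hh' : ∀ q ∈ Ioi ζR, deriv h q < 0)
    (hderiv : ∀ q ∈ Ioi ζR,
      deriv P q = (q - ζR) * (PR q - ζL) / ((PR q - ζR) * (P q - ζL)) *
        Real.exp (2 * h q)) :
    (∀ q₁ ∈ Ioi ζR, ∀ q₂ ∈ Ioi ζR, P q₁ = q₁ → P q₂ = q₂ → q₁ = q₂) ∧
    (∀ q ∈ Ioi ζR, P q = q → deriv P q < 1) := by
  obtain ⟨L, hL, hPL⟩ := hlim
  have hPd : ∀ x ∈ Ioi ζR, DifferentiableAt ℝ P x := fun x hx =>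
    (hP2.differentiableOn (by norm_num)).differentiableAt (isOpen_Ioi.mem_nhds hx)
  have hfixL : ∀ q ∈ Ioi ζR, P q = q → ζL < q := fun q hq hfix => hfix ▸ hPgt q hq
  have hfixG : ∀ q ∈ Ioi ζR, P q = q → deriv P q = fixedPointSlope ζR ζL PR h q :=
    fun q hq hfix => by rw [hderiv q hq, hfix, fixedPointSlope_eq]
  have hstable : ∀ q₀ ∈ Ioi ζR, P q₀ = q₀ → deriv P q₀ < 1 := by
    intro q₀ hq₀ hfix₀
    obtain ⟨q, ⟨hq, hqq₀⟩, hHq, hpos⟩ := exists_first_zero_of_eventually_pos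
      (H := fun x => P x - x) (hP2.continuousOn.sub continuousOn_id)
      ((hPL.sub (tendsto_id.mono_left nhdsWithin_le_nhds)).eventually_const_lt (by linarith))
      hq₀ (sub_eq_zero.mpr hfix₀)
    have hfix : P q = q := sub_eq_zero.mp hHq
    have hqL := hfixL q hq hfix
    obtain ⟨g, hg, hG⟩ := exists_hasDerivAt_fixedPointSlope_neg hζ hqL (hPRdiff q hq)
      (hhdiff q hq) (hPRlt q hq) (hPR' q hq) (hh' q hq)
    have hq1 : deriv P q < 1 := by
      refine deriv_lt_one_of_fixed_of_lt_left (eventually_of_mem (isOpen_Ioi.mem_nhds hq) hPd)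
        hfix ?_ ?_ hG hg hqL.ne'
      · filter_upwards [Ioo_mem_nhdsLT hq] with x hx using sub_pos.mp (hpos x hx)
      · filter_upwards [Ioi_mem_nhds hqL] with x hx
        rw [hderiv x (hζ.trans_lt hx), fixedPointSlope_mul_div (ne_of_gt hx)]
    calc deriv P q₀ = fixedPointSlope ζR ζL PR h q₀ := hfixG q₀ hq₀ hfix₀
      _ ≤ fixedPointSlope ζR ζL PR h q :=
          (strictAntiOn_fixedPointSlope hζ hPRdiff hhdiff hPRlt hPR' hh').antitoneOn
            hqL (hfixL q₀ hq₀ hfix₀) hqq₀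
      _ = deriv P q := (hfixG q hq hfix).symm
      _ < 1 := hq1
  exact ⟨fun q₁ h₁ q₂ h₂ => eq_of_fixed_of_deriv_lt_one hPd hstable h₁ h₂, hstable⟩
end
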